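/- Let d ≥ 1, let u : ℝ^d → ℂ be a smooth compactly supported function, and let a : ℝ^d → ℝ be smooth. Then 2·Re ∫_{ℝ^d} Δu(x)·(Δa(x)·conj(u)(x) + 2·⟨∇a(x), ∇conj(u)(x)⟩) dx = ∫_{ℝ^d} Δ²a(x)·|u(x)|² dx - 4·Re ∫_{ℝ^d} Σ_{j,k} ∂_j u(x)·∂_j∂_k a(x)·∂_k conj(u)(x) dx. -/

import Mathlib

open MeasureTheory Complex

noncomputable section

/-- Partial derivative `∂_j f` of a complex-valued function on `ℝ^d`. -/
def pdC {d : ℕ} (j : Fin d) (f : EuclideanSpace ℝ (Fin d) → ℂ)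
    (x : EuclideanSpace ℝ (Fin d)) : ℂ :=
  fderiv ℝ f x (EuclideanSpace.single j 1)

/-- Partial derivative `∂_j f` of a real-valued function on `ℝ^d`. -/
def pdR {d : ℕ} (j : Fin d) (f : EuclideanSpace ℝ (Fin d) → ℝ)
    (x : EuclideanSpace ℝ (Fin d)) : ℝ :=
  fderiv ℝ f x (EuclideanSpace.single j 1)

/-- Laplacian of a complex-valued function on `ℝ^d`:
the trace of the second Fréchet derivative. -/
def lapC {d : ℕ} (f : EuclideanSpace ℝ (Fin d) → ℂ)
    (x : EuclideanSpace ℝ (Fin d)) : ℂ :=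
  ∑ i : Fin d, iteratedFDeriv ℝ 2 f x
    ![EuclideanSpace.single i 1, EuclideanSpace.single i 1]

/-- Laplacian of a real-valued function on `ℝ^d`. -/
def lapR {d : ℕ} (f : EuclideanSpace ℝ (Fin d) → ℝ)
    (x : EuclideanSpace ℝ (Fin d)) : ℝ :=
  ∑ i : Fin d, iteratedFDeriv ℝ 2 f x
    ![EuclideanSpace.single i 1, EuclideanSpace.single i 1]

/-!
Write `φ = Δa ū + 2 ∇a·∇ū`. Green's identity gives `∫ Δu φ = -∫ ∇u·∇φ`. By the product rule,
`∂_k |z|² = 2 Re (∂_k z · z̄)` for `z = u` and `z = ∂_j u`, and `∂_j ∂_k u = ∂_k ∂_j u`,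
pointwise
`2 Re ∇u·∇φ = ∇Δa·∇|u|² + 2 Δa |∇u|² + 4 Re Σ_{j,k} ∂_j u ∂_j∂_k a ∂_k ū + 2 ∇a·∇|∇u|²`.
Green's identity for the real pairs `(Δa, |u|²)` and `(a, |∇u|²)` turns the first term into
`-∫ Δ²a |u|²` and makes the two `|∇u|²` terms cancel.
-/

open scoped ContDiff ComplexConjugate

section Calculus

variable {E F : Type*} [NormedAddCommGroup E] [NormedSpace ℝ E] [NormedAddCommGroup F]
  [NormedSpace ℝ F]

theorem ContDiff.continuous_fderiv_apply_const {h : E → F} (hh : ContDiff ℝ 1 h) (v : E) :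
    Continuous (fderiv ℝ h · v) :=
  (hh.continuous_fderiv one_ne_zero).clm_apply continuous_const

theorem fderiv_fderiv_apply_const {f : E → F} {x : E} (hf : DifferentiableAt ℝ (fderiv ℝ f) x)
    (v w : E) : fderiv ℝ (fderiv ℝ f · v) x w = fderiv ℝ (fderiv ℝ f) x w v := by
  simp [fderiv_clm_apply hf (differentiableAt_const v)]

@[fun_prop]
theorem ContDiff.differentiable_of_smooth {f : E → F} (hf : ContDiff ℝ ∞ f) :
    Differentiable ℝ f :=
  hf.differentiable (by simp)

end Calculus

@[fun_prop]
theorem contDiff_ofReal {n : WithTop ℕ∞} : ContDiff ℝ n ((↑) : ℝ → ℂ) :=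
  ofRealCLM.contDiff

@[fun_prop]
theorem contDiff_conj {n : WithTop ℕ∞} : ContDiff ℝ n (conj : ℂ → ℂ) :=
  conjCLE.contDiff

@[fun_prop]
theorem contDiff_normSq {n : WithTop ℕ∞} : ContDiff ℝ n normSq := by
  simpa [← normSq_eq_norm_sq] using contDiff_norm_sq ℝ (E := ℂ) (n := n)

section IntegrationByParts

variable {𝕜 E : Type*} [RCLike 𝕜] [NormedAddCommGroup E] [NormedSpace ℝ E]
  [FiniteDimensional ℝ E] [MeasurableSpace E] [BorelSpace E]
  {μ : Measure E} [μ.IsAddHaarMeasure] {f g : E → 𝕜}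

theorem integral_fderiv_mul_eq_neg_mul_fderiv_of_hasCompactSupport (hf : ContDiff ℝ 1 f)
    (hg : ContDiff ℝ 1 g) (hgc : HasCompactSupport g) (v : E) :
    ∫ x, fderiv ℝ f x v * g x ∂μ = -∫ x, f x * fderiv ℝ g x v ∂μ := by
  rw [integral_mul_fderiv_eq_neg_fderiv_mul_of_integrable, neg_neg]
  · exact ((hf.continuous_fderiv_apply_const v).mul hg.continuous).integrable_of_hasCompactSupport
      hgc.mul_left
  · exact (hf.continuous.mul (hg.continuous_fderiv_apply_const v)).integrable_of_hasCompactSupport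
      (hgc.fderiv_apply ℝ v).mul_left
  · exact (hf.continuous.mul hg.continuous).integrable_of_hasCompactSupport hgc.mul_left
  · exact fun x _ => hf.differentiable one_ne_zero x
  · exact fun x _ => hg.differentiable one_ne_zero x

theorem integral_sum_fderiv_fderiv_mul_eq_neg {ι : Type*} [Fintype ι] (v : ι → E)
    (hf : ContDiff ℝ 2 f) (hg : ContDiff ℝ 1 g) (hgc : HasCompactSupport g) :
    ∫ x, (∑ i, fderiv ℝ (fderiv ℝ f · (v i)) x (v i)) * g x ∂μ
      = -∫ x, ∑ i, fderiv ℝ f x (v i) * fderiv ℝ g x (v i) ∂μ := by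
  have hfv : ∀ i, ContDiff ℝ 1 (fderiv ℝ f · (v i)) := fun i =>
    (hf.fderiv_right le_rfl).clm_apply contDiff_const
  simp_rw [Finset.sum_mul]
  rw [integral_finsetSum, integral_finsetSum, ← Finset.sum_neg_distrib]
  · exact Finset.sum_congr rfl fun i _ =>
      integral_fderiv_mul_eq_neg_mul_fderiv_of_hasCompactSupport (hfv i) hg hgc (v i)
  · exact fun i _ => ((hfv i).continuous.mul (hg.continuous_fderiv_apply_const (v i))
      ).integrable_of_hasCompactSupport (hgc.fderiv_apply ℝ (v i)).mul_left
  · exact fun i _ => (((hfv i).continuous_fderiv_apply_const (v i)).mul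
      hg.continuous).integrable_of_hasCompactSupport hgc.mul_left

end IntegrationByParts

variable {d : ℕ}

section PartialDerivatives

variable {f g : EuclideanSpace ℝ (Fin d) → ℂ} {r : EuclideanSpace ℝ (Fin d) → ℝ}
  (j k : Fin d) (x : EuclideanSpace ℝ (Fin d))

@[fun_prop]
theorem contDiff_pdC (hf : ContDiff ℝ ∞ f) : ContDiff ℝ ∞ (pdC j f) :=
  (hf.fderiv_right (by simp)).clm_apply contDiff_const

@[fun_prop]
theorem contDiff_pdR (hr : ContDiff ℝ ∞ r) : ContDiff ℝ ∞ (pdR j r) :=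
  (hr.fderiv_right (by simp)).clm_apply contDiff_const

theorem HasCompactSupport.pdC (hf : HasCompactSupport f) : HasCompactSupport (pdC j f) :=
  hf.fderiv_apply ℝ _

theorem HasCompactSupport.pdR (hr : HasCompactSupport r) : HasCompactSupport (pdR j r) :=
  hr.fderiv_apply ℝ _

theorem pdC_add (hf : Differentiable ℝ f) (hg : Differentiable ℝ g) :
    pdC j (fun y => f y + g y) x = pdC j f x + pdC j g x := by
  simp [pdC, fderiv_fun_add (hf x) (hg x)]

theorem pdC_mul (hf : Differentiable ℝ f) (hg : Differentiable ℝ g) :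
    pdC j (fun y => f y * g y) x = pdC j f x * g x + f x * pdC j g x := by
  simp only [pdC, fderiv_fun_mul (hf x) (hg x), add_apply, smul_apply,
    smul_eq_mul]
  ring

theorem pdC_const (c : ℂ) : pdC j (fun _ => c) x = 0 := by
  simp [pdC]

theorem pdC_sum {ι : Type*} (s : Finset ι) {F : ι → EuclideanSpace ℝ (Fin d) → ℂ}
    (hF : ∀ i ∈ s, Differentiable ℝ (F i)) :
    pdC j (fun y => ∑ i ∈ s, F i y) x = ∑ i ∈ s, pdC j (F i) x := by
  simp [pdC, fderiv_fun_sum fun i hi => hF i hi x]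

theorem pdR_sum {ι : Type*} (s : Finset ι) {F : ι → EuclideanSpace ℝ (Fin d) → ℝ}
    (hF : ∀ i ∈ s, Differentiable ℝ (F i)) :
    pdR j (fun y => ∑ i ∈ s, F i y) x = ∑ i ∈ s, pdR j (F i) x := by
  simp [pdR, fderiv_fun_sum fun i hi => hF i hi x]

theorem pdC_conj : pdC j (fun y => conj (f y)) x = conj (pdC j f x) := by
  simp only [pdC, starRingEnd_apply, fderiv_star]
  rfl

theorem pdC_ofReal (hr : Differentiable ℝ r) : pdC j (fun y => (r y : ℂ)) x = pdR j r x := by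
  have h : HasFDerivAt (fun y => (r y : ℂ)) (ofRealCLM.comp (fderiv ℝ r x)) x :=
    ofRealCLM.hasFDerivAt.comp x (hr x).hasFDerivAt
  rw [pdC, h.fderiv]
  rfl

theorem pdR_re (hf : Differentiable ℝ f) : pdR j (fun y => (f y).re) x = (pdC j f x).re := by
  have h : HasFDerivAt (fun y => (f y).re) (reCLM.comp (fderiv ℝ f x)) x :=
    reCLM.hasFDerivAt.comp x (hf x).hasFDerivAt
  rw [pdR, h.fderiv]
  rfl

theorem pdR_normSq (hf : Differentiable ℝ f) :
    pdR j (fun y => normSq (f y)) x = 2 * (pdC j f x * conj (f x)).re := by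
  have h : (fun y => normSq (f y)) = fun y => (f y * conj (f y)).re := by
    simp [mul_conj]
  rw [h, pdR_re j x (by fun_prop), pdC_mul j x hf (by fun_prop), pdC_conj]
  simp only [add_re, mul_re, conj_re, conj_im]
  ring

theorem pdC_pdC (hf : ContDiff ℝ 2 f) :
    pdC j (pdC k f) x
      = fderiv ℝ (fderiv ℝ f) x (EuclideanSpace.single j 1) (EuclideanSpace.single k 1) :=
  fderiv_fderiv_apply_const ((hf.fderiv_right (m := 1) le_rfl).differentiable one_ne_zero x) _ _

theorem pdC_comm (hf : ContDiff ℝ 2 f) : pdC j (pdC k f) x = pdC k (pdC j f) x := by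
  rw [pdC_pdC j k x hf, pdC_pdC k j x hf]
  exact hf.contDiffAt.isSymmSndFDerivAt (by simp) _ _

omit j k x in
theorem lapC_eq_sum_pdC (hf : ContDiff ℝ 2 f) : lapC f = fun x => ∑ i, pdC i (pdC i f) x := by
  ext x
  simp [lapC, iteratedFDeriv_two_apply, pdC_pdC _ _ x hf]

omit j k x in
theorem lapR_eq_sum_pdR (hr : ContDiff ℝ 2 r) : lapR r = fun x => ∑ i, pdR i (pdR i r) x := by
  ext x
  simp only [lapR, iteratedFDeriv_two_apply]
  exact Finset.sum_congr rfl fun i _ => (fderiv_fderiv_apply_const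
    ((hr.fderiv_right (m := 1) le_rfl).differentiable one_ne_zero x) _ _).symm

omit j k x in
@[fun_prop]
theorem contDiff_lapR (hr : ContDiff ℝ ∞ r) : ContDiff ℝ ∞ (lapR r) := by
  rw [lapR_eq_sum_pdR (hr.of_le ENat.LEInfty.out)]
  fun_prop

end PartialDerivatives

section Green

variable {f g : EuclideanSpace ℝ (Fin d) → ℂ} {r s : EuclideanSpace ℝ (Fin d) → ℝ}

theorem integral_lapC_mul (hf : ContDiff ℝ 2 f) (hg : ContDiff ℝ 1 g)
    (hgc : HasCompactSupport g) :
    ∫ x, lapC f x * g x = -∫ x, ∑ i, pdC i f x * pdC i g x := by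
  rw [lapC_eq_sum_pdC hf]
  exact integral_sum_fderiv_fderiv_mul_eq_neg _ hf hg hgc

theorem integral_lapR_mul (hr : ContDiff ℝ 2 r) (hs : ContDiff ℝ 1 s)
    (hsc : HasCompactSupport s) :
    ∫ x, lapR r x * s x = -∫ x, ∑ i, pdR i r x * pdR i s x := by
  rw [lapR_eq_sum_pdR hr]
  exact integral_sum_fderiv_fderiv_mul_eq_neg _ hr hs hsc

end Green

section Morawetz

variable {u : EuclideanSpace ℝ (Fin d) → ℂ} {a : EuclideanSpace ℝ (Fin d) → ℝ}

def morawetzMultiplier (a : EuclideanSpace ℝ (Fin d) → ℝ)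
    (u : EuclideanSpace ℝ (Fin d) → ℂ) (x : EuclideanSpace ℝ (Fin d)) : ℂ :=
  lapR a x * conj (u x) + 2 * ∑ k, (pdR k a x : ℂ) * conj (pdC k u x)

def gradNormSq (u : EuclideanSpace ℝ (Fin d) → ℂ) (x : EuclideanSpace ℝ (Fin d)) : ℝ :=
  ∑ j, normSq (pdC j u x)

@[fun_prop]
theorem contDiff_morawetzMultiplier (hu : ContDiff ℝ ∞ u) (ha : ContDiff ℝ ∞ a) :
    ContDiff ℝ ∞ (morawetzMultiplier a u) := by
  unfold morawetzMultiplier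
  fun_prop

@[fun_prop]
theorem contDiff_gradNormSq (hu : ContDiff ℝ ∞ u) : ContDiff ℝ ∞ (gradNormSq u) := by
  unfold gradNormSq
  fun_prop

theorem pdC_morawetzMultiplier (hu : ContDiff ℝ ∞ u) (ha : ContDiff ℝ ∞ a) (j : Fin d)
    (x : EuclideanSpace ℝ (Fin d)) :
    pdC j (morawetzMultiplier a u) x
      = pdR j (lapR a) x * conj (u x) + lapR a x * conj (pdC j u x)
        + 2 * ∑ k, (pdR j (pdR k a) x * conj (pdC k u x)
          + pdR k a x * conj (pdC j (pdC k u) x)) := by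
  unfold morawetzMultiplier
  simp (disch := fun_prop) only [pdC_add, pdC_mul, pdC_const, pdC_sum, pdC_ofReal, pdC_conj,
    zero_mul, zero_add]

theorem pdR_gradNormSq (hu : ContDiff ℝ ∞ u) (k : Fin d) (x : EuclideanSpace ℝ (Fin d)) :
    pdR k (gradNormSq u) x = ∑ j, 2 * (pdC j u x * conj (pdC j (pdC k u) x)).re := by
  unfold gradNormSq
  rw [pdR_sum _ _ _ fun j _ => by fun_prop]
  refine Finset.sum_congr rfl fun j _ => ?_
  rw [pdR_normSq _ _ (by fun_prop), pdC_comm _ _ _ (hu.of_le ENat.LEInfty.out)]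
  simp only [mul_re, conj_re, conj_im]
  ring

theorem two_mul_re_sum_pdC_mul_pdC_morawetzMultiplier (hu : ContDiff ℝ ∞ u)
    (ha : ContDiff ℝ ∞ a) (x : EuclideanSpace ℝ (Fin d)) :
    2 * (∑ j, pdC j u x * pdC j (morawetzMultiplier a u) x).re
      = ∑ j, pdR j (lapR a) x * pdR j (fun y => normSq (u y)) x
        + 2 * (lapR a x * gradNormSq u x)
        + 4 * (∑ j, ∑ k, pdC j u x * (pdR j (pdR k a) x : ℂ) * conj (pdC k u x)).re
        + 2 * ∑ k, pdR k a x * pdR k (gradNormSq u) x := by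
  have re_mul_ofReal_mul : ∀ (z w : ℂ) (r : ℝ), (z * (r * w)).re = r * (z * w).re := fun z w r => by
    rw [mul_left_comm, re_ofReal_mul]
  have re_mul_ofReal_mul' : ∀ (z w : ℂ) (r : ℝ), (z * r * w).re = r * (z * w).re := fun z w r => by
    rw [mul_right_comm, mul_comm, re_ofReal_mul]
  have re_mul_two_mul : ∀ (z w : ℂ), (z * (2 * w)).re = 2 * (z * w).re := fun z w => by
    simpa using re_mul_ofReal_mul z w 2
  simp only [pdC_morawetzMultiplier hu ha, pdR_normSq _ _ hu.differentiable_of_smooth,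
    pdR_gradNormSq hu, gradNormSq, mul_add, Finset.mul_sum, mul_conj,
    Finset.sum_add_distrib, re_sum, add_re, re_mul_ofReal_mul, re_mul_ofReal_mul',
    re_mul_two_mul, ofReal_re]
  rw [Finset.sum_comm (f := fun k j =>
    2 * (pdR k a x * (2 * (pdC j u x * conj (pdC j (pdC k u) x)).re)))]
  simp only [show (4 : ℝ) = 2 * 2 by norm_num, mul_left_comm, mul_assoc, add_assoc]

theorem hasCompactSupport_morawetzMultiplier (hu : HasCompactSupport u) :
    HasCompactSupport (morawetzMultiplier a u) := by
  have hconj : ∀ {f : EuclideanSpace ℝ (Fin d) → ℂ}, HasCompactSupport f →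
      HasCompactSupport (fun x => conj (f x)) := fun hf => hf.comp_left (map_zero conj)
  have hsum : HasCompactSupport fun x => ∑ k, (pdR k a x : ℂ) * conj (pdC k u x) := by
    rw [← Finset.sum_fn]
    exact HasCompactSupport.finset_sum fun k _ => (hconj (hu.pdC k)).mul_left
  exact (hconj hu).mul_left.add hsum.mul_left

theorem hasCompactSupport_gradNormSq (hu : HasCompactSupport u) :
    HasCompactSupport (gradNormSq u) := by
  unfold gradNormSq
  rw [← Finset.sum_fn]
  exact HasCompactSupport.finset_sum fun j _ => (hu.pdC j).comp_left (map_zero normSq)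

theorem two_mul_re_integral_sum_pdC_mul_pdC_morawetzMultiplier (hu : ContDiff ℝ ∞ u)
    (husupp : HasCompactSupport u) (ha : ContDiff ℝ ∞ a) :
    2 * (∫ x, ∑ j, pdC j u x * pdC j (morawetzMultiplier a u) x).re
      = (∫ x, ∑ j, pdR j (lapR a) x * pdR j (fun y => normSq (u y)) x)
        + 2 * (∫ x, lapR a x * gradNormSq u x)
        + 4 * (∫ x, ∑ j, ∑ k, pdC j u x * (pdR j (pdR k a) x : ℂ) * conj (pdC k u x)).re
        + 2 * (∫ x, ∑ k, pdR k a x * pdR k (gradNormSq u) x) := by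
  have hgrad := hasCompactSupport_gradNormSq husupp
  have hI : Integrable fun x => ∑ j, pdC j u x * pdC j (morawetzMultiplier a u) x :=
    integrable_finsetSum _ fun j _ => (by fun_prop : Continuous _).integrable_of_hasCompactSupport
      (husupp.pdC j).mul_right
  have hP1 : Integrable fun x => ∑ j, pdR j (lapR a) x * pdR j (fun y => normSq (u y)) x :=
    integrable_finsetSum _ fun j _ => (by fun_prop : Continuous _).integrable_of_hasCompactSupport
      ((husupp.comp_left (map_zero normSq)).pdR j).mul_left
  have hP2 : Integrable fun x => lapR a x * gradNormSq u x :=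
    (by fun_prop : Continuous _).integrable_of_hasCompactSupport hgrad.mul_left
  have hP3 : Integrable fun x => ∑ k, pdR k a x * pdR k (gradNormSq u) x :=
    integrable_finsetSum _ fun k _ => (by fun_prop : Continuous _).integrable_of_hasCompactSupport
      (hgrad.pdR k).mul_left
  have hf3 : Integrable fun x =>
      ∑ j, ∑ k, pdC j u x * (pdR j (pdR k a) x : ℂ) * conj (pdC k u x) :=
    integrable_finsetSum _ fun j _ => integrable_finsetSum _ fun k _ =>
      (by fun_prop : Continuous _).integrable_of_hasCompactSupport
        ((husupp.pdC j).mul_right).mul_right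
  have hre : ∀ {f : EuclideanSpace ℝ (Fin d) → ℂ}, Integrable f →
      (∫ x, f x).re = ∫ x, (f x).re :=
    fun hf => (integral_re hf).symm
  rw [hre hI, hre hf3, ← integral_const_mul, ← integral_const_mul, ← integral_const_mul,
    ← integral_const_mul, ← integral_add, ← integral_add, ← integral_add]
  · exact integral_congr_ae (ae_of_all _ (two_mul_re_sum_pdC_mul_pdC_morawetzMultiplier hu ha))
  · exact (hP1.add (hP2.const_mul 2)).add (hf3.re.const_mul 4)
  · exact hP3.const_mul 2
  · exact hP1.add (hP2.const_mul 2)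
  · exact hf3.re.const_mul 4
  · exact hP1
  · exact hP2.const_mul 2

end Morawetz

theorem morawetz_laplacian_identity_general (d : ℕ)
    (u : EuclideanSpace ℝ (Fin d) → ℂ)
    (hu : ContDiff ℝ (⊤ : ℕ∞) u) (husupp : HasCompactSupport u)
    (a : EuclideanSpace ℝ (Fin d) → ℝ) (ha : ContDiff ℝ (⊤ : ℕ∞) a) :
    2 * (∫ x, lapC u x * ((lapR a x : ℂ) * (starRingEnd ℂ) (u x)
          + 2 * ∑ j, (pdR j a x : ℂ)
              * pdC j (fun y => (starRingEnd ℂ) (u y)) x)).re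
      = (∫ x, lapR (lapR a) x * Complex.normSq (u x))
        - 4 * (∫ x, ∑ j, ∑ k, pdC j u x * (pdR j (pdR k a) x : ℂ)
            * pdC k (fun y => (starRingEnd ℂ) (u y)) x).re := by
  simp only [pdC_conj]
  change 2 * (∫ x, lapC u x * morawetzMultiplier a u x).re = _
  rw [integral_lapC_mul (hu.of_le ENat.LEInfty.out)
      ((contDiff_morawetzMultiplier hu ha).of_le ENat.LEInfty.out)
      (hasCompactSupport_morawetzMultiplier husupp),
    integral_lapR_mul ((contDiff_lapR ha).of_le ENat.LEInfty.out)
      ((by fun_prop : ContDiff ℝ ∞ fun y => normSq (u y)).of_le ENat.LEInfty.out)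
      (husupp.comp_left (map_zero normSq)),
    neg_re]
  have hgreen := integral_lapR_mul (ha.of_le ENat.LEInfty.out)
    ((contDiff_gradNormSq hu).of_le ENat.LEInfty.out) (hasCompactSupport_gradNormSq husupp)
  linarith [two_mul_re_integral_sum_pdC_mul_pdC_morawetzMultiplier hu husupp ha]

/-- **Classical Morawetz integration-by-parts identity for the Laplacian part of the
multiplier computation** (used in eq. 3.9 of Proposition 3.1 and in the Appendix of
the paper). For `u : ℝ^d → ℂ` smooth and compactly supported and `a : ℝ^d → ℝ` smooth:
`2 Re ∫ Δu·(Δa·conj u + 2⟨∇a, ∇ conj u⟩) = ∫ Δ²a·|u|² - 4 Re ∫ Σ_{j,k} ∂_j u·∂_j∂_k a·∂_k conj u`. -/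
theorem morawetz_laplacian_identity (d : ℕ) (hd : 1 ≤ d)
    (u : EuclideanSpace ℝ (Fin d) → ℂ)
    (hu : ContDiff ℝ (⊤ : ℕ∞) u) (husupp : HasCompactSupport u)
    (a : EuclideanSpace ℝ (Fin d) → ℝ) (ha : ContDiff ℝ (⊤ : ℕ∞) a) :
    2 * (∫ x, lapC u x * ((lapR a x : ℂ) * (starRingEnd ℂ) (u x)
          + 2 * ∑ j, (pdR j a x : ℂ)
              * pdC j (fun y => (starRingEnd ℂ) (u y)) x)).re
      = (∫ x, lapR (lapR a) x * Complex.normSq (u x))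
        - 4 * (∫ x, ∑ j, ∑ k, pdC j u x * (pdR j (pdR k a) x : ℂ)
            * pdC k (fun y => (starRingEnd ℂ) (u y)) x).re :=
  morawetz_laplacian_identity_general d u hu husupp a ha

end
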